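/- arXiv:2503.15054 — 3 statements merged into one kernel-verified Lean document; each statement's English description precedes it below -/
import Mathlib

section
/- Let M ∈ ℂ^{n×n} and Z ∈ ℂ^{m×m} be Hermitian matrices, let X_t ∈ ℂ^{m×n}, and let λ ∈ ℝ be such that λ·I_{mn} − Mᵀ ⊗ Z is positive semidefinite, where ⊗ denotes the Kronecker product. Then for every X ∈ ℂ^{m×n}: Re tr(Z X M Xᴴ) ≤ λ‖X‖_F² + 2 Re tr((Z X_t M − λ X_t)ᴴ X) + Re tr(X_tᴴ (λ X_t − Z X_t M)), and equality holds when X = X_t. -/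
/-!
Vectorising `X` turns `tr(Aᴴ B)` into `star (vec A) ⬝ᵥ vec B` and `Z X M` into
`(Mᵀ ⊗ Z) *ᵥ vec X`. With `P = λ I − Mᵀ ⊗ Z` and `q x = Re (star x ⬝ᵥ P *ᵥ x)`, the identity
`q x = q y + 2 Re ⟪P y, x − y⟫ + q (x − y)` and `q (x − y) ≥ 0` say that `q` lies above its
tangent at `y = vec Xₜ`; moving the `λ`-terms across gives the claimed majorant, which touches
at `x = y`.
-/

open Matrix
open scoped Kronecker ComplexOrder

/-- Squared Frobenius norm: `‖A‖_F² = tr(Aᴴ A)` (a real number). -/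
noncomputable def frobNormSq {m n : ℕ} (A : Matrix (Fin m) (Fin n) ℂ) : ℝ :=
  (Aᴴ * A).trace.re

namespace Matrix

open RCLike

variable {ι 𝕜 : Type*} [Fintype ι] [RCLike 𝕜]

lemma re_star_dotProduct_comm (u v : ι → 𝕜) : re (star u ⬝ᵥ v) = re (star v ⬝ᵥ u) := by
  rw [star_dotProduct, RCLike.star_def, RCLike.conj_re]

lemma PosSemidef.re_dotProduct_mulVec_tangent_le {P : Matrix ι ι 𝕜} (hP : P.PosSemidef)
    (x y : ι → 𝕜) :
    2 * re (star (P *ᵥ y) ⬝ᵥ x) - re (star y ⬝ᵥ (P *ᵥ y)) ≤ re (star x ⬝ᵥ (P *ᵥ x)) := by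
  have hdiff := (RCLike.nonneg_iff.mp (hP.dotProduct_mulVec_nonneg (x - y))).1
  have hsymm : star y ⬝ᵥ (P *ᵥ x) = star (P *ᵥ y) ⬝ᵥ x := by
    rw [star_mulVec, hP.isHermitian.eq, dotProduct_mulVec]
  have hcomm := re_star_dotProduct_comm (P *ᵥ y) x
  simp only [star_sub, mulVec_sub, dotProduct_sub, sub_dotProduct, map_sub, hsymm] at hdiff
  linarith

def majorant (A : Matrix ι ι 𝕜) (lam : ℝ) (y x : ι → 𝕜) : ℝ :=
  lam * re (star x ⬝ᵥ x) + 2 * re (star (A *ᵥ y - (lam : 𝕜) • y) ⬝ᵥ x)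
    + re (star y ⬝ᵥ ((lam : 𝕜) • y - A *ᵥ y))

lemma re_dotProduct_mulVec_le_majorant [DecidableEq ι] {A : Matrix ι ι 𝕜} {lam : ℝ}
    (h : ((lam : 𝕜) • (1 : Matrix ι ι 𝕜) - A).PosSemidef) (y x : ι → 𝕜) :
    re (star x ⬝ᵥ (A *ᵥ x)) ≤ majorant A lam y x := by
  have htangent := h.re_dotProduct_mulVec_tangent_le x y
  simp only [majorant, sub_mulVec, smul_mulVec, one_mulVec, star_sub, star_smul, dotProduct_sub,
    sub_dotProduct, dotProduct_smul, smul_dotProduct, map_sub, smul_eq_mul, RCLike.star_def,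
    RCLike.conj_ofReal, RCLike.re_ofReal_mul] at htangent ⊢
  linarith

lemma majorant_self (A : Matrix ι ι 𝕜) (lam : ℝ) (y : ι → 𝕜) :
    majorant A lam y y = re (star y ⬝ᵥ (A *ᵥ y)) := by
  have hcomm := re_star_dotProduct_comm (A *ᵥ y) y
  simp only [majorant, star_sub, star_smul, dotProduct_sub, sub_dotProduct, dotProduct_smul,
    smul_dotProduct, map_sub, smul_eq_mul, RCLike.star_def, RCLike.conj_ofReal,
    RCLike.re_ofReal_mul]
  linarith

end Matrix

theorem stmt_0_general {m n : ℕ} (M : Matrix (Fin n) (Fin n) ℂ) (Z : Matrix (Fin m) (Fin m) ℂ)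
    (Xt : Matrix (Fin m) (Fin n) ℂ) (lam : ℝ)
    (hPSD : ((lam : ℂ) • (1 : Matrix (Fin n × Fin m) (Fin n × Fin m) ℂ) - Mᵀ ⊗ₖ Z).PosSemidef) :
    (∀ X : Matrix (Fin m) (Fin n) ℂ,
      (Z * X * M * Xᴴ).trace.re ≤
        lam * frobNormSq X + 2 * ((Z * Xt * M - (lam : ℂ) • Xt)ᴴ * X).trace.re
          + (Xtᴴ * ((lam : ℂ) • Xt - Z * Xt * M)).trace.re) ∧
    ((Z * Xt * M * Xtᴴ).trace.re =
        lam * frobNormSq Xt + 2 * ((Z * Xt * M - (lam : ℂ) • Xt)ᴴ * Xt).trace.re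
          + (Xtᴴ * ((lam : ℂ) • Xt - Z * Xt * M)).trace.re) := by
  have hquad : ∀ X : Matrix (Fin m) (Fin n) ℂ,
      (Z * X * M * Xᴴ).trace.re = RCLike.re (star (vec X) ⬝ᵥ ((Mᵀ ⊗ₖ Z) *ᵥ vec X)) := by
    intro X
    rw [trace_mul_comm, kronecker_mulVec_vec, transpose_transpose, star_vec_dotProduct_vec,
      RCLike.re_to_complex]
  have hmaj : ∀ X : Matrix (Fin m) (Fin n) ℂ,
      lam * frobNormSq X + 2 * ((Z * Xt * M - (lam : ℂ) • Xt)ᴴ * X).trace.re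
          + (Xtᴴ * ((lam : ℂ) • Xt - Z * Xt * M)).trace.re
        = majorant (Mᵀ ⊗ₖ Z) lam (vec Xt) (vec X) := by
    intro X
    simp only [majorant, frobNormSq, kronecker_mulVec_vec, transpose_transpose, ← vec_smul,
      ← vec_sub, star_vec_dotProduct_vec, RCLike.re_to_complex, RCLike.ofReal_eq_complex_ofReal]
  refine ⟨fun X => ?_, ?_⟩
  · rw [hquad, hmaj]
    exact re_dotProduct_mulVec_le_majorant hPSD (vec Xt) (vec X)
  · rw [hquad, hmaj, majorant_self]

/-- majorization lemma for `Re tr(Z X M Xᴴ)`.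
If `M`, `Z` are Hermitian and `λ I_{mn} - Mᵀ ⊗ Z` is positive semidefinite, then for every `X`,
`Re tr(Z X M Xᴴ) ≤ λ‖X‖_F² + 2 Re tr((Z Xₜ M − λ Xₜ)ᴴ X) + Re tr(Xₜᴴ (λ Xₜ − Z Xₜ M))`,
with equality at `X = Xₜ`. -/
theorem stmt_0 {m n : ℕ} (M : Matrix (Fin n) (Fin n) ℂ) (Z : Matrix (Fin m) (Fin m) ℂ)
    (hM : M.IsHermitian) (hZ : Z.IsHermitian) (Xt : Matrix (Fin m) (Fin n) ℂ) (lam : ℝ)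
    (hPSD : ((lam : ℂ) • (1 : Matrix (Fin n × Fin m) (Fin n × Fin m) ℂ) - Mᵀ ⊗ₖ Z).PosSemidef) :
    (∀ X : Matrix (Fin m) (Fin n) ℂ,
      (Z * X * M * Xᴴ).trace.re ≤
        lam * frobNormSq X + 2 * ((Z * Xt * M - (lam : ℂ) • Xt)ᴴ * X).trace.re
          + (Xtᴴ * ((lam : ℂ) • Xt - Z * Xt * M)).trace.re) ∧
    ((Z * Xt * M * Xtᴴ).trace.re =
        lam * frobNormSq Xt + 2 * ((Z * Xt * M - (lam : ℂ) • Xt)ᴴ * Xt).trace.re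
          + (Xtᴴ * ((lam : ℂ) • Xt - Z * Xt * M)).trace.re) :=
  stmt_0_general M Z Xt lam hPSD
end

section
/- Let ρ > 0, β > 0, ξ > 0, and A, C₀ ∈ ℂ^{m×n}. Define C̃ = (ρ A + β C₀)/(ρ + β), and set C* = C̃ if ‖C̃‖_F ≤ ξ, and C* = (ξ / ‖C̃‖_F) · C̃ otherwise. Then ‖C*‖_F ≤ ξ, and for every C ∈ ℂ^{m×n} with ‖C‖_F ≤ ξ: (ρ/2)‖A − C*‖_F² + (β/2)‖C* − C₀‖_F² ≤ (ρ/2)‖A − C‖_F² + (β/2)‖C − C₀‖_F². That is, C* is a global minimizer of the proximal-regularized objective over the Frobenius-norm ball of radius ξ. -/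
/-!
Since `ρ + β > 0`, the parallel-axis identity
`ρ‖A − C‖² + β‖C − C₀‖² = (ρ + β)‖C − C̃‖² + const` reduces the minimization over the ball to
finding the point of the ball nearest to `C̃`. The radial retraction `C*` is such a point: when
`‖C̃‖ > ξ`, `‖C* − C̃‖ = ‖C̃‖ − ξ ≤ ‖C̃‖ − ‖C‖ ≤ ‖C − C̃‖`. The Frobenius norm is the Euclidean norm
of the vectorized matrix, so all of this happens in a real inner product space.
-/

open Matrix

/-- Frobenius norm: `‖A‖_F = √(tr(Aᴴ A))`. -/
noncomputable def frobNorm {m n : ℕ} (A : Matrix (Fin m) (Fin n) ℂ) : ℝ :=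
  Real.sqrt ((Aᴴ * A).trace.re)

section Retraction
variable {E : Type*} [NormedAddCommGroup E] [NormedSpace ℝ E]

noncomputable def ballRetraction (ξ : ℝ) (x : E) : E :=
  if ‖x‖ ≤ ξ then x else (ξ / ‖x‖) • x

lemma norm_ballRetraction_le {ξ : ℝ} (hξ : 0 ≤ ξ) (x : E) : ‖ballRetraction ξ x‖ ≤ ξ := by
  unfold ballRetraction
  split_ifs with hx
  · exact hx
  · have hx0 : 0 < ‖x‖ := hξ.trans_lt (not_le.mp hx)
    rw [norm_smul, Real.norm_of_nonneg (by positivity), div_mul_cancel₀ _ hx0.ne']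

lemma norm_ballRetraction_sub_self_le {ξ : ℝ} {c : E} (hc : ‖c‖ ≤ ξ) (x : E) :
    ‖ballRetraction ξ x - x‖ ≤ ‖c - x‖ := by
  unfold ballRetraction
  split_ifs with hx
  · simp
  · have hx0 : 0 < ‖x‖ := (norm_nonneg c).trans_lt (hc.trans_lt (not_le.mp hx))
    have hdist : ‖(ξ / ‖x‖) • x - x‖ = ‖x‖ - ξ := by
      have hcoef : 0 ≤ 1 - ξ / ‖x‖ := by
        rw [sub_nonneg, div_le_one hx0]
        exact (not_le.mp hx).le
      rw [norm_sub_rev, show x - (ξ / ‖x‖) • x = (1 - ξ / ‖x‖) • x by rw [sub_smul, one_smul],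
        norm_smul, Real.norm_of_nonneg hcoef, sub_mul, one_mul, div_mul_cancel₀ _ hx0.ne']
    rw [hdist, norm_sub_rev]
    linarith [norm_sub_norm_le x c]

end Retraction

section WeightedMean
variable {E : Type*} [NormedAddCommGroup E] [InnerProductSpace ℝ E]

lemma weighted_norm_sub_sq_eq {ρ β : ℝ} {a b m : E} (hm : (ρ + β) • m = ρ • a + β • b)
    (c : E) :
    ρ * ‖a - c‖ ^ 2 + β * ‖c - b‖ ^ 2 =
      (ρ + β) * ‖c - m‖ ^ 2 + (ρ * ‖a - m‖ ^ 2 + β * ‖m - b‖ ^ 2) := by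
  have hinner : ∀ y : E, (ρ + β) * inner ℝ y m = ρ * inner ℝ y a + β * inner ℝ y b := by
    intro y
    simpa only [inner_add_right, real_inner_smul_right] using congrArg (inner ℝ y) hm
  simp only [norm_sub_sq_real]
  linear_combination 2 * hinner c - 2 * hinner m + 2 * ρ * real_inner_comm a c
    - 2 * ρ * real_inner_comm a m + 2 * (ρ + β) * real_inner_self_eq_norm_sq m

lemma weighted_norm_sub_sq_le_of_norm_sub_mean_le {ρ β : ℝ} (hρβ : 0 ≤ ρ + β) {a b m : E}
    (hm : (ρ + β) • m = ρ • a + β • b) {x c : E} (hx : ‖x - m‖ ≤ ‖c - m‖) :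
    ρ / 2 * ‖a - x‖ ^ 2 + β / 2 * ‖x - b‖ ^ 2 ≤ ρ / 2 * ‖a - c‖ ^ 2 + β / 2 * ‖c - b‖ ^ 2 := by
  have := mul_le_mul_of_nonneg_left (pow_le_pow_left₀ (norm_nonneg _) hx 2) hρβ
  linarith [weighted_norm_sub_sq_eq hm x, weighted_norm_sub_sq_eq hm c]

end WeightedMean

lemma frobNorm_eq_norm_toLp_vec {m n : ℕ} (A : Matrix (Fin m) (Fin n) ℂ) :
    frobNorm A = ‖WithLp.toLp 2 A.vec‖ := by
  rw [frobNorm, norm_eq_sqrt_re_inner (𝕜 := ℂ), EuclideanSpace.inner_toLp_toLp, dotProduct_comm,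
    star_vec_dotProduct_vec]
  rfl

/-- with `C̃ = (ρA + βC₀)/(ρ+β)` and `C*` its projection onto the Frobenius
ball of radius `ξ`, the matrix `C*` globally minimizes
`(ρ/2)‖A − C‖_F² + (β/2)‖C − C₀‖_F²` over `{C : ‖C‖_F ≤ ξ}`. -/
theorem stmt_6 {m n : ℕ} (ρ β ξ : ℝ) (hρ : 0 < ρ) (hβ : 0 < β) (hξ : 0 < ξ)
    (A C₀ Ct Cstar : Matrix (Fin m) (Fin n) ℂ)
    (hCt : Ct = ((1 / (ρ + β) : ℝ) : ℂ) • ((ρ : ℂ) • A + (β : ℂ) • C₀))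
    (hCstar : Cstar = if frobNorm Ct ≤ ξ then Ct else ((ξ / frobNorm Ct : ℝ) : ℂ) • Ct) :
    frobNorm Cstar ≤ ξ ∧
    ∀ C : Matrix (Fin m) (Fin n) ℂ, frobNorm C ≤ ξ →
      ρ / 2 * frobNorm (A - Cstar) ^ 2 + β / 2 * frobNorm (Cstar - C₀) ^ 2 ≤
        ρ / 2 * frobNorm (A - C) ^ 2 + β / 2 * frobNorm (C - C₀) ^ 2 := by
  let := InnerProductSpace.rclikeToReal ℂ (EuclideanSpace ℂ (Fin n × Fin m))
  have hρβ : 0 < ρ + β := add_pos hρ hβ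
  have hmean :
      (ρ + β) • WithLp.toLp 2 Ct.vec = ρ • WithLp.toLp 2 A.vec + β • WithLp.toLp 2 C₀.vec := by
    simp only [hCt, vec_smul, vec_add, WithLp.toLp_smul, WithLp.toLp_add, ← Complex.coe_smul,
      smul_smul, ← Complex.ofReal_mul]
    rw [mul_one_div_cancel hρβ.ne', Complex.ofReal_one, one_smul]
  have hproj : WithLp.toLp 2 Cstar.vec = ballRetraction ξ (WithLp.toLp 2 Ct.vec) := by
    rw [hCstar, ballRetraction, frobNorm_eq_norm_toLp_vec]
    split_ifs
    · rfl
    · simp only [vec_smul, WithLp.toLp_smul, Complex.coe_smul]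
  simp only [frobNorm_eq_norm_toLp_vec, vec_sub, WithLp.toLp_sub, hproj]
  exact ⟨norm_ballRetraction_le hξ.le _, fun C hC =>
    weighted_norm_sub_sq_le_of_norm_sub_mean_le hρβ.le hmean (norm_ballRetraction_sub_self_le hC _)⟩
end

section
/- Let E be a finite-dimensional real inner product space, let f : E → ℝ be differentiable with gradient ∇f satisfying ‖∇f(x) − ∇f(y)‖ ≤ L‖x − y‖ for all x, y ∈ E (L ≥ 0), let S ⊆ E, let λ > L, let x ∈ S, and let x⁺ ∈ S satisfy ⟨∇f(x), x⁺ − x⟩ + (λ/2)‖x⁺ − x‖² ≤ ⟨∇f(x), y − x⟩ + (λ/2)‖y − x‖² for all y ∈ S (i.e., x⁺ minimizes the proximal linearization of f at x over S). Then f(x) − f(x⁺) ≥ ((λ − L)/2)·‖x⁺ − x‖². -/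
/-! With `v = x⁺ - x`, the Lipschitz bound on the derivative makes
`t ↦ f (x + t v) - t ⟪∇f x, v⟫ - (L/2) t² ‖v‖²` antitone on `t ≥ 0`; comparing `t = 1` with
`t = 0` is the descent lemma `f x⁺ ≤ f x + ⟪∇f x, v⟫ + (L/2)‖v‖²`. Testing the minimality of `x⁺`
against the competitor `y = x` gives `⟪∇f x, v⟫ + (λ/2)‖v‖² ≤ 0`, and adding the two
inequalities proves the claim. -/

open InnerProductSpace

theorem le_add_fderiv_add_half_mul_sq_of_lipschitz {E : Type*} [NormedAddCommGroup E]
    [NormedSpace ℝ E] {f : E → ℝ} {f' : E → StrongDual ℝ E} {L : ℝ} {x : E}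
    (hf : ∀ z, HasFDerivAt f (f' z) z) (hLip : ∀ z, ‖f' z - f' x‖ ≤ L * ‖z - x‖) (y : E) :
    f y ≤ f x + f' x (y - x) + L / 2 * ‖y - x‖ ^ 2 := by
  set v := y - x
  set φ : ℝ → ℝ := fun t => f (x + t • v) - t * f' x v - L / 2 * t ^ 2 * ‖v‖ ^ 2
  have hφ' : ∀ t, HasDerivAt φ ((f' (x + t • v) - f' x) v - L * t * ‖v‖ ^ 2) t := by
    intro t
    have hline : HasDerivAt (fun t : ℝ => x + t • v) v t := by
      simpa using ((hasDerivAt_id t).smul_const v).const_add x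
    have hcomp : HasDerivAt (fun t => f (x + t • v)) (f' (x + t • v) v) t :=
      (hf _).comp_hasDerivAt t hline
    have hquad := ((hasDerivAt_pow 2 t).const_mul (L / 2)).mul_const (‖v‖ ^ 2)
    refine ((hcomp.sub ((hasDerivAt_id t).mul_const (f' x v))).sub hquad).congr_deriv ?_
    simp only [sub_apply, Nat.cast_ofNat]
    ring
  have hφ'_nonpos : ∀ t, 0 ≤ t → (f' (x + t • v) - f' x) v - L * t * ‖v‖ ^ 2 ≤ 0 := by
    intro t ht
    have hdiff : ‖f' (x + t • v) - f' x‖ ≤ L * t * ‖v‖ := by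
      simpa [norm_smul, abs_of_nonneg ht, mul_assoc] using hLip (x + t • v)
    have := (le_abs_self ((f' (x + t • v) - f' x) v)).trans
      ((f' (x + t • v) - f' x).le_opNorm v)
    nlinarith [norm_nonneg v]
  have hanti : AntitoneOn φ (Set.Ici 0) :=
    antitoneOn_of_hasDerivWithinAt_nonpos (convex_Ici 0)
      (continuous_iff_continuousAt.2 fun t => (hφ' t).continuousAt).continuousOn
      (fun t _ => (hφ' t).hasDerivWithinAt)
      (fun t ht => hφ'_nonpos t (interior_subset ht))
  have h10 : φ 1 ≤ φ 0 := hanti Set.self_mem_Ici (Set.mem_Ici.2 zero_le_one) zero_le_one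
  simp only [φ, v, one_smul, zero_smul, add_zero, add_sub_cancel] at h10
  linarith

theorem le_add_inner_gradient_add_half_mul_sq_of_lipschitz {E : Type*} [NormedAddCommGroup E]
    [InnerProductSpace ℝ E] [CompleteSpace E] {f : E → ℝ} {L : ℝ} {x : E}
    (hf : Differentiable ℝ f) (hLip : ∀ z, ‖gradient f z - gradient f x‖ ≤ L * ‖z - x‖)
    (y : E) :
    f y ≤ f x + inner ℝ (gradient f x) (y - x) + L / 2 * ‖y - x‖ ^ 2 :=
  le_add_fderiv_add_half_mul_sq_of_lipschitz (f' := fun z => toDual ℝ E (gradient f z))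
    (fun z => (hf z).hasGradientAt.hasFDerivAt)
    (fun z => by rw [← map_sub, LinearIsometryEquiv.norm_map]; exact hLip z) y

theorem stmt_8_general {E : Type*} [NormedAddCommGroup E] [InnerProductSpace ℝ E]
    [FiniteDimensional ℝ E] (f : E → ℝ) (hf : Differentiable ℝ f)
    (L : ℝ)
    (hLip : ∀ x y : E, ‖gradient f x - gradient f y‖ ≤ L * ‖x - y‖)
    (S : Set E) (lam : ℝ) (x xp : E) (hx : x ∈ S)
    (hmin : ∀ y ∈ S,
      (inner ℝ (gradient f x) (xp - x) : ℝ) + lam / 2 * ‖xp - x‖ ^ 2 ≤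
        (inner ℝ (gradient f x) (y - x) : ℝ) + lam / 2 * ‖y - x‖ ^ 2) :
    (lam - L) / 2 * ‖xp - x‖ ^ 2 ≤ f x - f xp := by
  have hdescent :=
    le_add_inner_gradient_add_half_mul_sq_of_lipschitz hf (fun z => hLip z x) xp
  have hstep := hmin x hx
  simp only [sub_self, inner_zero_right, norm_zero] at hstep
  linarith

/-- sufficient decrease of a proximal linearization step.
If `∇f` is `L`-Lipschitz, `λ > L`, and `x⁺ ∈ S` minimizes
`y ↦ ⟨∇f(x), y − x⟩ + (λ/2)‖y − x‖²` over `S ∋ x`, then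
`f(x) − f(x⁺) ≥ ((λ − L)/2)‖x⁺ − x‖²`. -/
theorem stmt_8 {E : Type*} [NormedAddCommGroup E] [InnerProductSpace ℝ E]
    [FiniteDimensional ℝ E] (f : E → ℝ) (hf : Differentiable ℝ f)
    (L : ℝ) (hL : 0 ≤ L)
    (hLip : ∀ x y : E, ‖gradient f x - gradient f y‖ ≤ L * ‖x - y‖)
    (S : Set E) (lam : ℝ) (hlam : L < lam) (x xp : E) (hx : x ∈ S) (hxp : xp ∈ S)
    (hmin : ∀ y ∈ S,
      (inner ℝ (gradient f x) (xp - x) : ℝ) + lam / 2 * ‖xp - x‖ ^ 2 ≤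
        (inner ℝ (gradient f x) (y - x) : ℝ) + lam / 2 * ‖y - x‖ ^ 2) :
    (lam - L) / 2 * ‖xp - x‖ ^ 2 ≤ f x - f xp :=
  stmt_8_general f hf L hLip S lam x xp hx hmin
end
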